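/- The sequence (X_i)_{i≥1} satisfies Condition A(3): for every k ≥ 2, every r ≥ 0, every 0 ≤ p ≤ r, and all indices i_1, …, i_r with 1 ≤ i_s < k for all s, E(X_k X_{i_1} ⋯ X_{i_p} X_k X_{i_{p+1}} ⋯ X_{i_r}) = 2 · E(X_{i_1} ⋯ X_{i_p}) · E(X_{i_{p+1}} ⋯ X_{i_r}). -/

import Mathlib

noncomputable section

/-- The relator set `{(f_k f_{k-1})^3 : k ≥ 2}`.  Generators are 0-indexed:
`FreeGroup.of n` represents the generator `f_{n+1}` of the paper, so the relators are
`(of k * of (k-1))^3` for `k ≥ 1`. -/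
def relSet : Set (FreeGroup ℕ) :=
  {w | ∃ k : ℕ, 1 ≤ k ∧ w = (FreeGroup.of k * FreeGroup.of (k - 1)) ^ 3}

/-- The group `G = F / ⟪relSet⟫`. -/
abbrev G : Type := FreeGroup ℕ ⧸ Subgroup.normalClosure relSet

/-- The quotient map `π : F → G`. -/
def piG : FreeGroup ℕ →* G := QuotientGroup.mk' _

/-- The complex group algebra `A = ℂ[G]`. -/
abbrev GA : Type := MonoidAlgebra ℂ G

/-- The expectation `E : A → ℂ`, the coefficient of the identity element. -/
def Ee (a : GA) : ℂ := a.coeff 1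

/-- `X i = f̄_{i+1} + f̄_{i+1}⁻¹` (0-indexed: `Xe i` is `X_{i+1}` of the paper). -/
def Xe (i : ℕ) : GA :=
  MonoidAlgebra.of ℂ G (piG (FreeGroup.of i)) +
    MonoidAlgebra.of ℂ G ((piG (FreeGroup.of i))⁻¹)


-- ## The free product model
open Monoid

def Mfac : ℕ → Type
  | 0 => Multiplicative ℤ
  | _ + 1 => Multiplicative (ZMod 3)

instance instGroupMfac : (i : ℕ) → Group (Mfac i)
  | 0 => inferInstanceAs (Group (Multiplicative ℤ))
  | _ + 1 => inferInstanceAs (Group (Multiplicative (ZMod 3)))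

instance instDecEqMfac : (i : ℕ) → DecidableEq (Mfac i)
  | 0 => inferInstanceAs (DecidableEq (Multiplicative ℤ))
  | _ + 1 => inferInstanceAs (DecidableEq (Multiplicative (ZMod 3)))

abbrev P : Type := CoprodI Mfac

def gen : (i : ℕ) → Mfac i
  | 0 => Multiplicative.ofAdd (1 : ℤ)
  | _ + 1 => Multiplicative.ofAdd (1 : ZMod 3)

lemma gen_ne_one : ∀ i, gen i ≠ 1
  | 0 => show Multiplicative.ofAdd (1 : ℤ) ≠ 1 by decide
  | _ + 1 => show Multiplicative.ofAdd (1 : ZMod 3) ≠ 1 by decide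

lemma gen_cube (n : ℕ) : gen (n + 1) ^ 3 = 1 :=
  (by decide : Multiplicative.ofAdd (1 : ZMod 3) ^ 3 = 1)

def aP (i : ℕ) : P := CoprodI.of (gen i)

def xP : ℕ → P
  | 0 => aP 0
  | n + 1 => aP (n + 1) * (xP n)⁻¹

lemma xP_mul (n : ℕ) : xP (n + 1) * xP n = aP (n + 1) := by
  simp [xP]

-- ## The homomorphism Φ : G →* P
def xHom : FreeGroup ℕ →* P := FreeGroup.lift xP

lemma xHom_relSet : ∀ w ∈ relSet, xHom w = 1 := by
  rintro w ⟨k, hk, rfl⟩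
  obtain ⟨m, rfl⟩ : ∃ m, k = m + 1 := ⟨k - 1, (Nat.succ_pred_eq_of_pos hk).symm⟩
  simp only [map_pow, map_mul, xHom, FreeGroup.lift_apply_of]
  rw [Nat.add_sub_cancel, xP_mul]
  rw [aP, ← map_pow, gen_cube, map_one]

def Phi : G →* P :=
  QuotientGroup.lift _ xHom (fun w hw =>
    Subgroup.normalClosure_le_normal (fun z hz => xHom_relSet z hz) hw)

lemma Phi_piG (w : FreeGroup ℕ) : Phi (piG w) = xHom w := rfl

lemma Phi_of (n : ℕ) : Phi (piG (FreeGroup.of n)) = xP n := by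
  rw [Phi_piG, xHom, FreeGroup.lift_apply_of]

-- ## The homomorphism Ψ : P →* G
def zmodHom {H : Type*} [Group H] (u : H) (h : u ^ 3 = 1) : Multiplicative (ZMod 3) →* H :=
  AddMonoidHom.toMultiplicativeLeft
    (ZMod.lift 3 ⟨zmultiplesHom (Additive H) (Additive.ofMul u), by
      rw [zmultiplesHom_apply, ← ofMul_zpow,
        zpow_natCast, h]; rfl⟩)

lemma zmodHom_apply {H : Type*} [Group H] (u : H) (h : u ^ 3 = 1) :
    zmodHom u h (Multiplicative.ofAdd (1 : ZMod 3)) = u := by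
  have : ((1 : ℤ) : ZMod 3) = (1 : ZMod 3) := by norm_num
  simp only [zmodHom, AddMonoidHom.toMultiplicativeLeft_apply_apply]
  rw [show (Multiplicative.ofAdd (1 : ZMod 3)).toAdd = ((1 : ℤ) : ZMod 3) by
    simpa using this.symm]
  rw [ZMod.lift_coe]
  simp [zmultiplesHom]

lemma fbar_cube (n : ℕ) : (piG (FreeGroup.of (n + 1)) * piG (FreeGroup.of n)) ^ 3 = 1 := by
  rw [← map_mul, ← map_pow]
  rw [piG, QuotientGroup.mk'_apply, QuotientGroup.eq_one_iff]
  exact Subgroup.subset_normalClosure ⟨n + 1, Nat.le_add_left 1 n, by simp⟩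

def PsiFam : (i : ℕ) → (Mfac i →* G)
  | 0 => zpowersHom G (piG (FreeGroup.of 0))
  | n + 1 => zmodHom (piG (FreeGroup.of (n + 1)) * piG (FreeGroup.of n)) (fbar_cube n)

def Psi : P →* G := CoprodI.lift PsiFam

lemma Psi_aP_succ (n : ℕ) :
    Psi (aP (n + 1)) = piG (FreeGroup.of (n + 1)) * piG (FreeGroup.of n) := by
  rw [aP, Psi, CoprodI.lift_of]
  show zmodHom _ (fbar_cube n) (Multiplicative.ofAdd (1 : ZMod 3)) = _
  exact zmodHom_apply _ _

lemma Psi_xP (n : ℕ) : Psi (xP n) = piG (FreeGroup.of n) := by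
  induction n with
  | zero =>
      show Psi (aP 0) = _
      rw [aP, Psi, CoprodI.lift_of]
      show zpowersHom G (piG (FreeGroup.of 0)) (Multiplicative.ofAdd (1 : ℤ)) = _
      rw [zpowersHom_apply]
      simp
  | succ n ih =>
      rw [xP, map_mul, map_inv, Psi_aP_succ, ih]
      group

lemma Psi_Phi (g : G) : Psi (Phi g) = g := by
  obtain ⟨w, rfl⟩ := QuotientGroup.mk'_surjective (Subgroup.normalClosure relSet) g
  show Psi (Phi (piG w)) = piG w
  rw [Phi_piG]
  have : Psi.comp xHom = piG := by
    ext n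
    show Psi (xHom (FreeGroup.of n)) = piG (FreeGroup.of n)
    rw [xHom, FreeGroup.lift_apply_of, Psi_xP]
  rw [← this]; rfl

lemma Phi_injective : Function.Injective Phi :=
  Function.LeftInverse.injective Psi_Phi

-- ## Subgroups generated by initial factors
open Monoid

def SP (k : ℕ) : Set P := {g | ∃ i, i < k ∧ ∃ m : Mfac i, g = CoprodI.of m}

def HP (k : ℕ) : Subgroup P := Subgroup.closure (SP k)

lemma equiv_one : CoprodI.Word.equiv (1 : P) = CoprodI.Word.empty :=
  show (1 : P) • (CoprodI.Word.empty : CoprodI.Word Mfac) = CoprodI.Word.empty from one_smul _ _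

lemma equiv_mul (a b : P) :
    CoprodI.Word.equiv (a * b) = a • CoprodI.Word.equiv b := mul_smul a b _

lemma prod_equiv (u : P) : (CoprodI.Word.equiv u).prod = u :=
  CoprodI.Word.equiv.symm_apply_apply u

lemma prod_injective : Function.Injective (CoprodI.Word.prod (M := Mfac)) := by
  intro w1 w2 h
  have h2 : CoprodI.Word.equiv (CoprodI.Word.equiv.symm w1)
      = CoprodI.Word.equiv (CoprodI.Word.equiv.symm w2) := congrArg _ (h : _)
  simpa using h2

lemma letters_smul (k i : ℕ) (hi : i < k) (m : Mfac i) (w : CoprodI.Word Mfac)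
    (hw : ∀ l ∈ w.toList, l.1 < k) :
    ∀ l ∈ (CoprodI.of m • w).toList, l.1 < k := by
  rintro ⟨i₁, m₁⟩ hl
  rw [CoprodI.Word.mem_smul_iff] at hl
  rcases hl with ⟨hne, hmem⟩ | ⟨hm1, hij, hrest⟩
  · exact hw _ hmem
  · subst hij; exact hi

lemma letters_lt {k : ℕ} {u : P} (hu : u ∈ HP k) :
    ∀ l ∈ (CoprodI.Word.equiv u).toList, l.1 < k := by
  induction hu using Subgroup.closure_induction_left with
  | one => intro l hl; rw [equiv_one] at hl; simp [CoprodI.Word.empty] at hl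
  | mul_left x hx y hy ih =>
      obtain ⟨i, hi, m, rfl⟩ := hx
      rw [equiv_mul]
      exact letters_smul k i hi m _ ih
  | inv_mul_cancel x hx y hy ih =>
      obtain ⟨i, hi, m, rfl⟩ := hx
      rw [← map_inv, equiv_mul]
      exact letters_smul k i hi m⁻¹ _ ih

lemma comm_eq_one {k : ℕ} {u : P} (hu : u ∈ HP k) (hcomm : aP k * u = u * aP k) :
    u = 1 := by
  by_contra hne
  set w := CoprodI.Word.equiv u with hwdef
  have hlet : ∀ l ∈ w.toList, l.1 < k := letters_lt hu
  have hprod : w.prod = u := prod_equiv u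
  have hnil : w.toList ≠ [] := by
    intro h
    apply hne
    have hw : w = CoprodI.Word.empty := CoprodI.Word.ext h
    rw [← hprod, hw, CoprodI.Word.prod_empty]
  have h1 : w.fstIdx ≠ some k := by
    rw [CoprodI.Word.fstIdx_ne_iff]
    intro l hl
    exact fun h => absurd (h ▸ hlet l (List.mem_of_mem_head? hl)) (lt_irrefl k)
  -- W1 = cons
  have hprod1 : (CoprodI.Word.cons (gen k) w h1 (gen_ne_one k)).prod = aP k * u := by
    rw [CoprodI.Word.prod_cons, hprod]; rfl
  -- W2 = append
  have hlast : ∀ l ∈ w.toList.getLast?, ∀ l' ∈ [(⟨k, gen k⟩ : Σ i, Mfac i)].head?,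
      Sigma.fst l ≠ Sigma.fst l' := by
    intro l hl l' hl'
    simp only [List.head?_cons, Option.mem_some_iff] at hl'
    subst hl'
    exact Nat.ne_of_lt (hlet l (List.mem_of_mem_getLast? hl))
  let W2 : CoprodI.Word Mfac :=
    { toList := w.toList ++ [⟨k, gen k⟩],
      ne_one := by
        intro l hl
        rcases List.mem_append.mp hl with h | h
        · exact w.ne_one l h
        · simp only [List.mem_singleton] at h
          subst h; exact gen_ne_one k
      chain_ne := List.IsChain.append w.chain_ne (List.isChain_singleton _) hlast }
  have hprod2 : W2.prod = u * aP k := by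
    show (List.map (fun l => CoprodI.of l.snd) (w.toList ++ [⟨k, gen k⟩])).prod = _
    rw [List.map_append, List.prod_append]
    have hh : (List.map (fun l => CoprodI.of l.snd) w.toList).prod = u := hprod
    rw [hh]
    simp [aP]
  have heq : CoprodI.Word.cons (gen k) w h1 (gen_ne_one k) = W2 :=
    prod_injective (by rw [hprod1, hprod2, hcomm])
  have hlist : (⟨k, gen k⟩ : Σ i, Mfac i) :: w.toList = w.toList ++ [⟨k, gen k⟩] :=
    congrArg CoprodI.Word.toList heq
  obtain ⟨c, rest, hcr⟩ := List.exists_cons_of_ne_nil hnil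
  rw [hcr, List.cons_append] at hlist
  have hc : (⟨k, gen k⟩ : Σ i, Mfac i) = c := (List.cons.injEq _ _ _ _ ▸ hlist).1
  have : c.1 < k := hlet c (by rw [hcr]; exact List.mem_cons_self)
  rw [← hc] at this
  exact absurd this (lt_irrefl k)

-- ## Retraction and the key conjugation lemma
def rP (k : ℕ) : P →* P :=
  CoprodI.lift (fun i => if _ : i < k then CoprodI.of else 1)

lemma rP_fix {k : ℕ} {u : P} (hu : u ∈ HP k) : rP k u = u := by
  induction hu using Subgroup.closure_induction with
  | mem x hx =>
      obtain ⟨i, hi, m, rfl⟩ := hx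
      rw [rP, CoprodI.lift_of, dif_pos hi]
  | one => exact map_one _
  | mul x y hx hy ihx ihy => rw [map_mul, ihx, ihy]
  | inv x hx ihx => rw [map_inv, ihx]

lemma rP_aP {k : ℕ} : rP k (aP k) = 1 := by
  rw [aP, rP, CoprodI.lift_of, dif_neg (lt_irrefl k)]
  rfl

lemma K1 {k : ℕ} {u v : P} (hu : u ∈ HP k) (hv : v ∈ HP k)
    (h : aP k * u * (aP k)⁻¹ * v = 1) : u = 1 ∧ v = 1 := by
  have hr := congrArg (rP k) h
  simp only [map_mul, map_inv, map_one, rP_aP, rP_fix hu, rP_fix hv,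
    one_mul, inv_one, mul_one] at hr
  -- hr : u * v = 1
  have hv' : v = u⁻¹ := (inv_eq_of_mul_eq_one_right hr).symm
  subst hv'
  have h2 : aP k * u * (aP k)⁻¹ = u := mul_inv_eq_one.mp h
  have hcomm : aP k * u = u * aP k := by
    conv_rhs => rw [← h2]
    group
  have hu1 := comm_eq_one hu hcomm
  exact ⟨hu1, by simp [hu1]⟩

-- ## The subgroup of G generated by the first k generators
def SG (k : ℕ) : Set G := {g | ∃ i, i < k ∧ g = piG (FreeGroup.of i)}

def HG (k : ℕ) : Subgroup G := Subgroup.closure (SG k)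

lemma xP_mem_HP (k : ℕ) : ∀ i, i < k → xP i ∈ HP k := by
  intro i
  induction i with
  | zero =>
      intro hi
      exact Subgroup.subset_closure ⟨0, hi, gen 0, rfl⟩
  | succ n ih =>
      intro hi
      have h1 : aP (n + 1) ∈ HP k := Subgroup.subset_closure ⟨n + 1, hi, gen (n + 1), rfl⟩
      exact mul_mem h1 (inv_mem (ih (Nat.lt_of_succ_lt hi)))

lemma Phi_HG {k : ℕ} {g : G} (hg : g ∈ HG k) : Phi g ∈ HP k := by
  have hle : HG k ≤ (HP k).comap Phi := by
    apply (Subgroup.closure_le _).mpr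
    rintro x ⟨i, hi, rfl⟩
    show Phi (piG (FreeGroup.of i)) ∈ HP k
    rw [Phi_of]
    exact xP_mem_HP k i hi
  exact hle hg

-- ## The homomorphism θ : G → ℤ/3
lemma zmod3_cube : ∀ c : Multiplicative (ZMod 3), c ^ 3 = 1 := by decide

def theta (k : ℕ) : G →* Multiplicative (ZMod 3) :=
  QuotientGroup.lift _
    (FreeGroup.lift fun n => if n < k then 1 else Multiplicative.ofAdd (1 : ZMod 3))
    (fun w hw => Subgroup.normalClosure_le_normal
      (by rintro z ⟨j, hj, rfl⟩
          simp only [SetLike.mem_coe, MonoidHom.mem_ker, map_pow, zmod3_cube]) hw)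

lemma theta_of (k n : ℕ) :
    theta k (piG (FreeGroup.of n)) = if n < k then 1 else Multiplicative.ofAdd (1 : ZMod 3) := by
  show (FreeGroup.lift fun n => if n < k then 1 else
    Multiplicative.ofAdd (1 : ZMod 3)) (FreeGroup.of n) = _
  rw [FreeGroup.lift_apply_of]

lemma theta_HG {k : ℕ} {g : G} (hg : g ∈ HG k) : theta k g = 1 := by
  have hle : HG k ≤ (theta k).ker := by
    apply (Subgroup.closure_le _).mpr
    rintro x ⟨i, hi, rfl⟩
    show theta k (piG (FreeGroup.of i)) = 1
    rw [theta_of, if_pos hi]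
  exact hle hg

lemma L1a {k : ℕ} {g h : G} (hg : g ∈ HG k) (hh : h ∈ HG k) :
    piG (FreeGroup.of k) * g * piG (FreeGroup.of k) * h ≠ 1 := by
  intro heq
  have h3 := congrArg (theta k) heq
  rw [map_mul, map_mul, map_mul, map_one, theta_of, if_neg (lt_irrefl k),
    theta_HG hg, theta_HG hh] at h3
  revert h3; decide

lemma L1b {k : ℕ} {g h : G} (hg : g ∈ HG k) (hh : h ∈ HG k) :
    (piG (FreeGroup.of k))⁻¹ * g * (piG (FreeGroup.of k))⁻¹ * h ≠ 1 := by
  intro heq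
  have h3 := congrArg (theta k) heq
  rw [map_mul, map_mul, map_mul, map_one, map_inv, theta_of, if_neg (lt_irrefl k),
    theta_HG hg, theta_HG hh] at h3
  revert h3; decide

lemma L2 {m : ℕ} {g h : G} (hg : g ∈ HG (m + 1)) (hh : h ∈ HG (m + 1))
    (heq : piG (FreeGroup.of (m + 1)) * g * (piG (FreeGroup.of (m + 1)))⁻¹ * h = 1) :
    g = 1 ∧ h = 1 := by
  have hP := congrArg Phi heq
  rw [map_mul, map_mul, map_mul, map_inv, map_one, Phi_of] at hP
  have hy : xP m ∈ HP (m + 1) := xP_mem_HP _ m (Nat.lt_succ_self m)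
  have hu : (xP m)⁻¹ * Phi g * xP m ∈ HP (m + 1) :=
    mul_mem (mul_mem (inv_mem hy) (Phi_HG hg)) hy
  have hv : Phi h ∈ HP (m + 1) := Phi_HG hh
  have hxp : xP (m + 1) = aP (m + 1) * (xP m)⁻¹ := rfl
  rw [hxp] at hP
  have hre : aP (m + 1) * ((xP m)⁻¹ * Phi g * xP m) * (aP (m + 1))⁻¹ * Phi h = 1 := by
    rw [← hP]; group
  obtain ⟨hu1, hv1⟩ := K1 hu hv hre
  have hg1 : Phi g = 1 := by
    have h5 : xP m * ((xP m)⁻¹ * Phi g * xP m) * (xP m)⁻¹ = xP m * 1 * (xP m)⁻¹ := by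
      rw [hu1]
    simpa [mul_assoc] using h5
  constructor
  · exact Phi_injective (by rw [hg1, map_one])
  · exact Phi_injective (by rw [hv1, map_one])

lemma L2' {m : ℕ} {g h : G} (hg : g ∈ HG (m + 1)) (hh : h ∈ HG (m + 1))
    (heq : (piG (FreeGroup.of (m + 1)))⁻¹ * g * piG (FreeGroup.of (m + 1)) * h = 1) :
    g = 1 ∧ h = 1 := by
  set f := piG (FreeGroup.of (m + 1)) with hf
  have h3 : f * h * f⁻¹ * g = g⁻¹ * (f * (f⁻¹ * g * f * h) * f⁻¹) * g := by group
  rw [heq, show g⁻¹ * (f * 1 * f⁻¹) * g = 1 by group] at h3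
  obtain ⟨hh1, hg1⟩ := L2 hh hg h3
  exact ⟨hg1, hh1⟩

-- ## The expectation and span machinery
open scoped Classical
lemma Ee_add (a b : GA) : Ee (a + b) = Ee a + Ee b := rfl

lemma Ee_smul (c : ℂ) (a : GA) : Ee (c • a) = c * Ee a := rfl

lemma Ee_zero : Ee (0 : GA) = 0 := rfl

lemma Ee_of (g : G) : Ee (MonoidAlgebra.of ℂ G g) = if g = 1 then 1 else 0 := by
  show (Finsupp.single g (1 : ℂ)) 1 = _
  rw [Finsupp.single_apply]

def Vk (k : ℕ) : Submodule ℂ GA :=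
  Submodule.span ℂ {a | ∃ g ∈ HG k, a = MonoidAlgebra.of ℂ G g}

lemma Xe_mul_mem {k i : ℕ} (hi : i < k) {v : GA} (hv : v ∈ Vk k) : Xe i * v ∈ Vk k := by
  induction hv using Submodule.span_induction with
  | mem x hx =>
      obtain ⟨g, hg, rfl⟩ := hx
      have hfi : piG (FreeGroup.of i) ∈ HG k := Subgroup.subset_closure ⟨i, hi, rfl⟩
      rw [Xe, add_mul, ← map_mul, ← map_mul]
      exact add_mem
        (Submodule.subset_span ⟨_, mul_mem hfi hg, rfl⟩)
        (Submodule.subset_span ⟨_, mul_mem (inv_mem hfi) hg, rfl⟩)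
  | zero => rw [mul_zero]; exact zero_mem _
  | add x y hx hy ihx ihy => rw [mul_add]; exact add_mem ihx ihy
  | smul c x hx ihx => rw [mul_smul_comm]; exact Submodule.smul_mem _ c ihx

lemma prod_mem_Vk {k : ℕ} (L : List ℕ) (hL : ∀ i ∈ L, i < k) : (L.map Xe).prod ∈ Vk k := by
  induction L with
  | nil =>
      exact Submodule.subset_span ⟨1, one_mem _, (map_one (MonoidAlgebra.of ℂ G)).symm⟩
  | cons i L ih =>
      rw [List.map_cons, List.prod_cons]
      exact Xe_mul_mem (hL i List.mem_cons_self)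
        (ih fun j hj => hL j (List.mem_cons_of_mem i hj))

lemma key_single {m : ℕ} {g h : G} (hg : g ∈ HG (m + 1)) (hh : h ∈ HG (m + 1)) :
    Ee (Xe (m + 1) * MonoidAlgebra.of ℂ G g * Xe (m + 1) * MonoidAlgebra.of ℂ G h)
      = 2 * Ee (MonoidAlgebra.of ℂ G g) * Ee (MonoidAlgebra.of ℂ G h) := by
  set z := piG (FreeGroup.of (m + 1)) with hz
  have expand : Xe (m + 1) * MonoidAlgebra.of ℂ G g * Xe (m + 1) * MonoidAlgebra.of ℂ G h
      = MonoidAlgebra.of ℂ G (z * g * z * h) + MonoidAlgebra.of ℂ G (z * g * z⁻¹ * h)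
        + (MonoidAlgebra.of ℂ G (z⁻¹ * g * z * h)
            + MonoidAlgebra.of ℂ G (z⁻¹ * g * z⁻¹ * h)) := by
    simp only [Xe, ← hz, add_mul, mul_add, ← map_mul]
    abel
  have hA : (z * g * z⁻¹ * h = 1) ↔ (g = 1 ∧ h = 1) :=
    ⟨fun hyp => L2 hg hh hyp, by rintro ⟨rfl, rfl⟩; group⟩
  have hB : (z⁻¹ * g * z * h = 1) ↔ (g = 1 ∧ h = 1) :=
    ⟨fun hyp => L2' hg hh hyp, by rintro ⟨rfl, rfl⟩; group⟩
  have l1a := L1a hg hh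
  have l1b := L1b hg hh
  rw [← hz] at l1a l1b
  simp only [expand, Ee_add, Ee_of, if_neg l1a, if_neg l1b, hA, hB]
  by_cases hg1 : g = 1 <;> by_cases hh1 : h = 1 <;>
    simp [hg1, hh1] <;> norm_num

lemma key_left {m : ℕ} {b : GA} (hb : b ∈ Vk (m + 1)) {g : G} (hg : g ∈ HG (m + 1)) :
    Ee (Xe (m + 1) * MonoidAlgebra.of ℂ G g * Xe (m + 1) * b)
      = 2 * Ee (MonoidAlgebra.of ℂ G g) * Ee b := by
  induction hb using Submodule.span_induction with
  | mem x hx =>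
      obtain ⟨h, hh, rfl⟩ := hx
      exact key_single hg hh
  | zero => rw [mul_zero, Ee_zero, mul_zero]
  | add x y hx hy ihx ihy => rw [mul_add, Ee_add, Ee_add, ihx, ihy]; ring
  | smul c x hx ihx => rw [mul_smul_comm, Ee_smul, Ee_smul, ihx]; ring

lemma key_both {m : ℕ} {a b : GA} (ha : a ∈ Vk (m + 1)) (hb : b ∈ Vk (m + 1)) :
    Ee (Xe (m + 1) * a * Xe (m + 1) * b) = 2 * Ee a * Ee b := by
  induction ha using Submodule.span_induction with
  | mem x hx =>
      obtain ⟨g, hg, rfl⟩ := hx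
      exact key_left hb hg
  | zero => rw [mul_zero, zero_mul, zero_mul, Ee_zero, mul_zero, zero_mul]

  | add x y hx hy ihx ihy =>
      rw [mul_add, add_mul, add_mul, Ee_add, Ee_add, ihx, ihy]; ring
  | smul c x hx ihx =>
      rw [mul_smul_comm, smul_mul_assoc, smul_mul_assoc, Ee_smul, Ee_smul, ihx]; ring


/-- The sequence `(X_i)` satisfies Condition A(3):
`E(X_k X_{i_1} ⋯ X_{i_p} X_k X_{i_{p+1}} ⋯ X_{i_r}) = 2 ⋅ E(X_{i_1} ⋯ X_{i_p}) ⋅ E(X_{i_{p+1}} ⋯ X_{i_r})`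
whenever all `i_s < k`.  (0-indexed: `Xe i` is `X_{i+1}` of the paper, so "k ≥ 2"
becomes `1 ≤ k`.) -/
theorem Xe_conditionA3 (k : ℕ) (hk : 1 ≤ k) (L₁ L₂ : List ℕ)
    (hL₁ : ∀ i ∈ L₁, i < k) (hL₂ : ∀ i ∈ L₂, i < k) :
    Ee (Xe k * (L₁.map Xe).prod * Xe k * (L₂.map Xe).prod)
      = 2 * Ee ((L₁.map Xe).prod) * Ee ((L₂.map Xe).prod) := by
  obtain ⟨m, rfl⟩ : ∃ m, k = m + 1 := ⟨k - 1, (Nat.succ_pred_eq_of_pos hk).symm⟩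
  exact key_both (prod_mem_Vk L₁ hL₁) (prod_mem_Vk L₂ hL₂)
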